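/- Under the iterative Condorcet rule applied to the superman-kryptonite tournament on n players, player 1 wins with probability 1/2 − 1/(n(n−1)) and player n wins with probability 2/(n(n−1)). -/

import Mathlib

abbrev Tournament (n : ℕ) := Fin n → Fin n → Bool

def IsTournament {n : ℕ} (T : Tournament n) : Prop :=
  (∀ i, T i i = false) ∧ ∀ i j : Fin n, i ≠ j → T i j = !T j i

def CondorcetWinner {n : ℕ} (T : Tournament n) (i : Fin n) : Prop :=
  ∀ j, j ≠ i → T i j = true

def PairAdjacent {n : ℕ} (i j : Fin n) (T T' : Tournament n) : Prop :=
  ∀ a b : Fin n, ¬((a = i ∧ b = j) ∨ (a = j ∧ b = i)) → T a b = T' a b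

def SAdjacent {n : ℕ} (S : Finset (Fin n)) (T T' : Tournament n) : Prop :=
  ∀ a b : Fin n, (a ∉ S ∨ b ∉ S) → T a b = T' a b

def IsRule {n : ℕ} (r : Tournament n → Fin n → ℝ) : Prop :=
  ∀ T, IsTournament T → (∀ i, 0 ≤ r T i) ∧ (∑ i, r T i) = 1

def CondorcetConsistent {n : ℕ} (r : Tournament n → Fin n → ℝ) : Prop :=
  ∀ T, IsTournament T → ∀ i, CondorcetWinner T i → r T i = 1

def SNM2 {n : ℕ} (r : Tournament n → Fin n → ℝ) (α : ℝ) : Prop :=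
  ∀ T T' : Tournament n, IsTournament T → IsTournament T' →
    ∀ i j : Fin n, i ≠ j → PairAdjacent i j T T' →
      r T' i + r T' j - r T i - r T j ≤ α

def SNMk {n : ℕ} (k : ℕ) (r : Tournament n → Fin n → ℝ) (α : ℝ) : Prop :=
  ∀ S : Finset (Fin n), S.card ≤ k → ∀ T T' : Tournament n,
    IsTournament T → IsTournament T' → SAdjacent S T T' →
      (∑ i ∈ S, r T' i) - (∑ i ∈ S, r T i) ≤ α

def flipTo {n : ℕ} (i j : Fin n) (T : Tournament n) : Tournament n :=
  fun a b => if a = i ∧ b = j then true else if a = j ∧ b = i then false else T a b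

def winCount {n : ℕ} (T : Tournament n) (i : Fin n) : ℕ :=
  (Finset.univ.filter fun j => T i j = true).card

def cyclicT (m w : ℕ) : Tournament m :=
  fun i j => decide (1 ≤ (j.val + m - i.val) % m ∧ (j.val + m - i.val) % m ≤ w)

def skT (n : ℕ) : Tournament n :=
  fun i j =>
    if i.val = n - 1 ∧ j.val = 0 then true
    else if i.val = 0 ∧ j.val = n - 1 then false
    else decide (i.val < j.val)

def survivors {n : ℕ} (π : Equiv.Perm (Fin n)) (t : ℕ) : Finset (Fin n) :=
  Finset.univ.filter fun x => ∀ s : Fin n, s.val < t → π s ≠ x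

def CondorcetIn {n : ℕ} (T : Tournament n) (S : Finset (Fin n)) (i : Fin n) : Prop :=
  i ∈ S ∧ ∀ j ∈ S, j ≠ i → T i j = true

/-- Removing players π 0, π 1, ... in order, the outcome of the iterative Condorcet
rule is the Condorcet winner of the first surviving set that has one. -/
def ICOutcome {n : ℕ} (T : Tournament n) (π : Equiv.Perm (Fin n)) (i : Fin n) : Prop :=
  ∃ t : ℕ, CondorcetIn T (survivors π t) i ∧
    ∀ s < t, ¬ ∃ w, CondorcetIn T (survivors π s) w

open Classical in
noncomputable def icRule (n : ℕ) : Tournament n → Fin n → ℝ :=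
  fun T i =>
    ((Finset.univ.filter fun π : Equiv.Perm (Fin n) => ICOutcome T π i).card : ℝ) /
      (Nat.factorial n)

/-!
Read a removal order `π` through the positions `π.symm x`, and write `z` for player 1 and `w`
for player `n`. While `z`, `w` and some third player survive there is no Condorcet winner
(`w` beats only `z`, who beats everybody else), so the rule stops at the first removal of `z` or
`w`, or once only `{z, w}` is left. Hence `z` wins iff `w` is removed before `z` and before the
last two positions, and `w` wins iff `z` and `w` occupy the last two positions. Among the `n!`
orders these happen `n!/2 - (n-2)!` and `2 (n-2)!` times.
-/

section Permutations

open Finset Equiv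

variable {α : Type*} [Fintype α]

theorem card_filter_perm_apply_eq_and_apply_eq [DecidableEq α] {a b x y : α}
    (hab : a ≠ b) (hxy : x ≠ y) :
    #{σ : Perm α | σ a = x ∧ σ b = y} = (Fintype.card α - 2).factorial := by
  obtain ⟨g, hg⟩ := Perm.exists_extending_pair ![a, b] ![x, y]
    (injective_pair_iff_ne.2 hab) (injective_pair_iff_ne.2 hxy)
  have hga : g a = x := hg 0
  have hgb : g b = y := hg 1
  calc #{σ : Perm α | σ a = x ∧ σ b = y}
      = #{τ : Perm α | τ a = a ∧ τ b = b} :=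
        card_equiv (Equiv.mulLeft g⁻¹) fun σ => by
          simp [eq_symm_apply, ← hga, ← hgb, eq_comm]
    _ = Fintype.card {τ : Perm α // ∀ v, ¬v ∉ ({a, b} : Finset α) → τ v = v} := by
        rw [Fintype.card_subtype]
        congr 1
        ext τ
        simp only [mem_filter, mem_univ, true_and, mem_insert, mem_singleton, not_not]
        constructor
        · rintro ⟨ha, hb⟩ v (rfl | rfl) <;> assumption
        · exact fun h => ⟨h a (.inl rfl), h b (.inr rfl)⟩
    _ = Fintype.card (Perm {v // v ∉ ({a, b} : Finset α)}) :=
        (Fintype.card_congr (Perm.subtypeEquivSubtypePerm _)).symm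
    _ = (Fintype.card α - 2).factorial := by
        rw [Fintype.card_perm, Fintype.card_subtype_compl, Fintype.card_coe, card_pair hab]

theorem two_mul_card_filter_perm_symm_lt [LinearOrder α] {x y : α} (hxy : x ≠ y) :
    2 * #{π : Perm α | π.symm x < π.symm y} = (Fintype.card α).factorial := by
  have hswap : #{π : Perm α | π.symm x < π.symm y} = #{π : Perm α | π.symm y < π.symm x} :=
    card_equiv (Equiv.mulLeft (swap x y)) fun π => by
      simp [Perm.mul_def, swap_apply_left, swap_apply_right]
  have hsplit := card_filter_add_card_filter_not (s := (univ : Finset (Perm α)))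
    (fun π => π.symm x < π.symm y)
  simp only [card_univ, Fintype.card_perm, not_lt] at hsplit
  rw [← hsplit, two_mul, hswap]
  congr 2
  ext π
  simp only [mem_filter, mem_univ, true_and]
  exact ⟨le_of_lt, fun h => h.lt_of_ne (π.symm.injective.ne hxy.symm)⟩

end Permutations

section IterativeCondorcet

open Finset Equiv

variable {n : ℕ}

theorem mem_survivors {π : Perm (Fin n)} {t : ℕ} {x : Fin n} :
    x ∈ survivors π t ↔ t ≤ (π.symm x : ℕ) := by
  simp only [survivors, mem_filter, mem_univ, true_and]
  constructor
  · intro h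
    by_contra hlt
    exact h (π.symm x) (by omega) (π.apply_symm_apply x)
  · rintro h s hs rfl
    simp only [symm_apply_apply] at h
    omega

theorem CondorcetIn.unique {T : Tournament n} (hT : IsTournament T) {S : Finset (Fin n)}
    {i j : Fin n} (hi : CondorcetIn T S i) (hj : CondorcetIn T S j) : i = j := by
  by_contra hij
  have hij' := hi.2 j hj.1 (Ne.symm hij)
  simp [hT.2 i j hij, hj.2 i hi.1 hij] at hij'

theorem ICOutcome.unique {T : Tournament n} (hT : IsTournament T) {π : Perm (Fin n)}
    {i j : Fin n} (hi : ICOutcome T π i) (hj : ICOutcome T π j) : i = j := by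
  obtain ⟨t, hti, hbefore_i⟩ := hi
  obtain ⟨s, hsj, hbefore_j⟩ := hj
  obtain rfl : t = s := by
    rcases lt_trichotomy t s with h | h | h
    · exact absurd ⟨i, hti⟩ (hbefore_j t h)
    · exact h
    · exact absurd ⟨j, hsj⟩ (hbefore_i s h)
  exact hti.unique hT hsj

end IterativeCondorcet

section SupermanKryptonite

open Finset Equiv

variable {n : ℕ} {z w : Fin n}

theorem skT_eq_true_iff (i j : Fin n) :
    skT n i j = true ↔ ((i : ℕ) = n - 1 ∧ (j : ℕ) = 0) ∨
      ((i : ℕ) < j ∧ ¬((i : ℕ) = 0 ∧ (j : ℕ) = n - 1)) := by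
  simp only [skT]
  split_ifs <;> simp <;> omega

theorem isTournament_skT (hn : 2 ≤ n) : IsTournament (skT n) := by
  refine ⟨fun i => ?_, fun i j hij => ?_⟩
  · rw [Bool.eq_false_iff, ne_eq, skT_eq_true_iff]
    omega
  · have hji := skT_eq_true_iff j i
    cases h : skT n j i
    · rw [Bool.not_false, skT_eq_true_iff]
      simp only [h, Bool.false_eq_true, false_iff] at hji
      omega
    · rw [Bool.not_true, Bool.eq_false_iff, ne_eq, skT_eq_true_iff]
      simp only [h, true_iff] at hji
      omega

theorem condorcetIn_skT_min' (hz : (z : ℕ) = 0) {S : Finset (Fin n)} (hzS : z ∉ S)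
    (hS : S.Nonempty) : CondorcetIn (skT n) S (S.min' hS) := by
  refine ⟨S.min'_mem hS, fun j hj hjmin => ?_⟩
  have hlt : S.min' hS < j := lt_of_le_of_ne (S.min'_le j hj) (Ne.symm hjmin)
  have hminz : S.min' hS ≠ z := ne_of_mem_of_not_mem (S.min'_mem hS) hzS
  rw [skT_eq_true_iff]
  omega

theorem exists_ne_ne_le_symm_apply {π : Perm (Fin n)}
    (h : (π.symm z : ℕ) < n - 2 ∨ (π.symm w : ℕ) < n - 2) :
    ∃ m, m ≠ z ∧ m ≠ w ∧ n - 2 ≤ (π.symm m : ℕ) := by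
  by_contra! hmid
  have hlast : ∀ p : Fin n, n - 2 ≤ (p : ℕ) → π.symm z = p ∨ π.symm w = p := by
    intro p hp
    by_contra! hp'
    have := hmid (π p) (fun h => hp'.1 (by rw [← h, symm_apply_apply]))
      (fun h => hp'.2 (by rw [← h, symm_apply_apply]))
    simp only [symm_apply_apply] at this
    omega
  have h2 := hlast ⟨n - 2, by omega⟩ le_rfl
  have h1 := hlast ⟨n - 1, by omega⟩ (by simp only; omega)
  simp only [Fin.ext_iff] at h2 h1
  omega

variable (hz : (z : ℕ) = 0) (hw : (w : ℕ) = n - 1) {S : Finset (Fin n)}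
include hz hw

theorem not_condorcetIn_skT {m i : Fin n} (hzS : z ∈ S) (hwS : w ∈ S) (hmS : m ∈ S)
    (hmz : m ≠ z) (hmw : m ≠ w) : ¬CondorcetIn (skT n) S i := by
  rintro ⟨hiS, hi⟩
  have hbeats : ∀ j ∈ S, j ≠ i → _ := fun j hj hji => (skT_eq_true_iff i j).1 (hi j hj hji)
  rcases eq_or_ne i z with rfl | hiz
  · have := hbeats w hwS (by omega)
    omega
  rcases eq_or_ne i w with rfl | hiw
  · have := hbeats m hmS hmw
    omega
  · have := hbeats z hzS (Ne.symm hiz)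
    omega

theorem condorcetIn_skT_zero (hzS : z ∈ S) (hwS : w ∉ S) : CondorcetIn (skT n) S z := by
  refine ⟨hzS, fun j hj hjz => ?_⟩
  have hjw : j ≠ w := ne_of_mem_of_not_mem hj hwS
  rw [skT_eq_true_iff]
  omega

theorem condorcetIn_skT_last (hwS : w ∈ S) (hS : S ⊆ {z, w}) :
    CondorcetIn (skT n) S w := by
  refine ⟨hwS, fun j hj hjw => ?_⟩
  have hjz : j = z := by simpa [hjw] using hS hj
  rw [skT_eq_true_iff]
  omega

variable {π : Perm (Fin n)}

theorem icOutcome_skT_zero (hwz : (π.symm w : ℕ) < π.symm z) (hw2 : (π.symm w : ℕ) < n - 2) :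
    ICOutcome (skT n) π z := by
  obtain ⟨m, hmz, hmw, hm⟩ := exists_ne_ne_le_symm_apply (z := z) (Or.inr hw2)
  refine ⟨π.symm w + 1, condorcetIn_skT_zero hz hw (mem_survivors.2 (by omega))
    (by rw [mem_survivors]; omega), fun s hs ⟨i, hi⟩ => ?_⟩
  exact not_condorcetIn_skT hz hw (mem_survivors.2 (by omega)) (mem_survivors.2 (by omega))
    (mem_survivors.2 (by omega)) hmz hmw hi

theorem icOutcome_skT_last (hn : 3 ≤ n) (hz2 : n - 2 ≤ (π.symm z : ℕ))
    (hw2 : n - 2 ≤ (π.symm w : ℕ)) : ICOutcome (skT n) π w := by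
  have hzw : π.symm z ≠ π.symm w := π.symm.injective.ne (by omega)
  refine ⟨n - 2, condorcetIn_skT_last hz hw (mem_survivors.2 hw2) fun x hx => ?_,
    fun s hs ⟨i, hi⟩ => ?_⟩
  · have hxz : x ≠ z → π.symm x ≠ π.symm z := π.symm.injective.ne
    have hxw : x ≠ w → π.symm x ≠ π.symm w := π.symm.injective.ne
    rw [mem_survivors] at hx
    simp only [mem_insert, mem_singleton]
    omega
  · set m := π ⟨n - 3, by omega⟩
    have hm : (π.symm m : ℕ) = n - 3 := by simp [m]
    exact not_condorcetIn_skT (m := m) hz hw (mem_survivors.2 (by omega))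
      (mem_survivors.2 (by omega)) (mem_survivors.2 (by omega))
      (fun h => by rw [h] at hm; omega) (fun h => by rw [h] at hm; omega) hi

theorem exists_icOutcome_skT_ne_ne (hzw : (π.symm z : ℕ) < π.symm w)
    (hz2 : (π.symm z : ℕ) < n - 2) : ∃ i, i ≠ z ∧ i ≠ w ∧ ICOutcome (skT n) π i := by
  obtain ⟨m, hmz, hmw, hm⟩ := exists_ne_ne_le_symm_apply (w := w) (Or.inl hz2)
  set S := survivors π (π.symm z + 1)
  have hzS : z ∉ S := by rw [mem_survivors]; omega
  have hmS : m ∈ S := mem_survivors.2 (by omega)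
  refine ⟨S.min' ⟨m, hmS⟩, ne_of_mem_of_not_mem (S.min'_mem _) hzS, ?_,
    π.symm z + 1, condorcetIn_skT_min' hz hzS _, fun s hs ⟨i, hi⟩ => ?_⟩
  · exact ne_of_lt (lt_of_le_of_lt (S.min'_le m hmS) (show m < w by omega))
  · exact not_condorcetIn_skT hz hw (mem_survivors.2 (by omega)) (mem_survivors.2 (by omega))
      (mem_survivors.2 (by omega)) hmz hmw hi

theorem icOutcome_skT_zero_iff (hn : 3 ≤ n) :
    ICOutcome (skT n) π z ↔ (π.symm w : ℕ) < π.symm z ∧ (π.symm w : ℕ) < n - 2 := by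
  refine ⟨fun h => ?_, fun h => icOutcome_skT_zero hz hw h.1 h.2⟩
  have hT := isTournament_skT (n := n) (by omega)
  have hzw : π.symm z ≠ π.symm w := π.symm.injective.ne (by omega)
  by_contra hcase
  by_cases hlast : n - 2 ≤ (π.symm z : ℕ) ∧ n - 2 ≤ (π.symm w : ℕ)
  · have := h.unique hT (icOutcome_skT_last hz hw hn hlast.1 hlast.2)
    omega
  · obtain ⟨i, hiz, -, hi⟩ := exists_icOutcome_skT_ne_ne hz hw (π := π) (by omega) (by omega)
    exact hiz (hi.unique hT h)

theorem icOutcome_skT_last_iff (hn : 3 ≤ n) :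
    ICOutcome (skT n) π w ↔ n - 2 ≤ (π.symm z : ℕ) ∧ n - 2 ≤ (π.symm w : ℕ) := by
  refine ⟨fun h => ?_, fun h => icOutcome_skT_last hz hw hn h.1 h.2⟩
  have hT := isTournament_skT (n := n) (by omega)
  have hzw : π.symm z ≠ π.symm w := π.symm.injective.ne (by omega)
  by_contra hcase
  by_cases hwz : (π.symm w : ℕ) < π.symm z
  · have := h.unique hT (icOutcome_skT_zero hz hw hwz (by omega))
    omega
  · obtain ⟨i, -, hiw, hi⟩ := exists_icOutcome_skT_ne_ne hz hw (π := π) (by omega) (by omega)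
    exact hiw (hi.unique hT h)

open Classical in
theorem card_icOutcome_skT_last (hn : 3 ≤ n) :
    #{π : Perm (Fin n) | ICOutcome (skT n) π w} = 2 * (n - 2).factorial := by
  have hzw : z ≠ w := by omega
  obtain ⟨p, hp⟩ : ∃ p : Fin n, (p : ℕ) = n - 1 := ⟨⟨n - 1, by omega⟩, rfl⟩
  obtain ⟨q, hq⟩ : ∃ q : Fin n, (q : ℕ) = n - 2 := ⟨⟨n - 2, by omega⟩, rfl⟩
  have hpq : p ≠ q := by omega
  have hsplit : ({π : Perm (Fin n) | ICOutcome (skT n) π w} : Finset _) =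
      ({π : Perm (Fin n) | π p = z ∧ π q = w} : Finset _) ∪
        ({π : Perm (Fin n) | π p = w ∧ π q = z} : Finset _) := by
    ext π
    have := π.symm.injective.ne hzw
    simp only [mem_union, mem_filter, mem_univ, true_and, icOutcome_skT_last_iff hz hw hn,
      ← eq_symm_apply, Fin.ext_iff]
    omega
  have hdisj : Disjoint ({π : Perm (Fin n) | π p = z ∧ π q = w} : Finset _)
      ({π : Perm (Fin n) | π p = w ∧ π q = z} : Finset _) :=
    disjoint_filter.2 fun π _ h h' => hzw (h.1.symm.trans h'.1)
  rw [hsplit, card_union_of_disjoint hdisj, card_filter_perm_apply_eq_and_apply_eq hpq hzw,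
    card_filter_perm_apply_eq_and_apply_eq hpq hzw.symm, Fintype.card_fin, two_mul]

open Classical in
theorem two_mul_card_icOutcome_skT_zero_add (hn : 3 ≤ n) :
    2 * #{π : Perm (Fin n) | ICOutcome (skT n) π z} + 2 * (n - 2).factorial = n.factorial := by
  have hzw : z ≠ w := by omega
  obtain ⟨p, hp⟩ : ∃ p : Fin n, (p : ℕ) = n - 1 := ⟨⟨n - 1, by omega⟩, rfl⟩
  obtain ⟨q, hq⟩ : ∃ q : Fin n, (q : ℕ) = n - 2 := ⟨⟨n - 2, by omega⟩, rfl⟩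
  have hpq : p ≠ q := by omega
  have hwins :
      ({π : Perm (Fin n) | π.symm w < π.symm z ∧ (π.symm w : ℕ) < n - 2} : Finset _) =
        ({π : Perm (Fin n) | ICOutcome (skT n) π z} : Finset _) := by
    ext π
    simp only [mem_filter, mem_univ, true_and, icOutcome_skT_zero_iff hz hw hn, Fin.lt_def]
  have hlast :
      ({π : Perm (Fin n) | π.symm w < π.symm z ∧ ¬(π.symm w : ℕ) < n - 2} : Finset _) =
        ({π : Perm (Fin n) | π p = z ∧ π q = w} : Finset _) := by
    ext π
    have := π.symm.injective.ne hzw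
    simp only [mem_filter, mem_univ, true_and, ← eq_symm_apply, Fin.ext_iff, Fin.lt_def]
    omega
  have hsplit := card_filter_add_card_filter_not
    (s := {π : Perm (Fin n) | π.symm w < π.symm z}) (fun π => (π.symm w : ℕ) < n - 2)
  rw [filter_filter, filter_filter, hwins, hlast,
    card_filter_perm_apply_eq_and_apply_eq hpq hzw, Fintype.card_fin] at hsplit
  have hhalf := two_mul_card_filter_perm_symm_lt hzw.symm
  rw [Fintype.card_fin] at hhalf
  omega

end SupermanKryptonite

theorem stmt_8 (n : ℕ) (hn : 3 ≤ n) :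
    icRule n (skT n) ⟨0, by omega⟩ = 1/2 - 1/((n:ℝ) * ((n:ℝ) - 1)) ∧
    icRule n (skT n) ⟨n - 1, by omega⟩ = 2/((n:ℝ) * ((n:ℝ) - 1)) := by
  have hzero := two_mul_card_icOutcome_skT_zero_add
    (z := ⟨0, by omega⟩) (w := ⟨n - 1, by omega⟩) rfl rfl hn
  have hlast := card_icOutcome_skT_last
    (z := ⟨0, by omega⟩) (w := ⟨n - 1, by omega⟩) rfl rfl hn
  have hfact : (n.factorial : ℝ) = n * (n - 1) * (n - 2).factorial := by
    rw [← Nat.mul_factorial_pred (by omega), ← Nat.mul_factorial_pred (n := n - 1) (by omega),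
      Nat.sub_sub]
    push_cast [Nat.cast_sub (by omega : 1 ≤ n)]
    ring
  have hn' : (3 : ℝ) ≤ n := by exact_mod_cast hn
  have hn1 : (0 : ℝ) < n - 1 := by linarith
  unfold icRule
  rw [hfact]
  constructor
  · have hzero' := congrArg ((↑) : ℕ → ℝ) hzero
    push_cast [hfact] at hzero'
    field_simp
    linear_combination hzero'
  · rw [hlast]
    push_cast
    field_simp
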